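/- arXiv:2401.05169 — 3 statements merged into one kernel-verified Lean document; each statement's English description precedes it below -/
import Mathlib

section
/- For every integer M, the set Ψ_M of M-approximable elements of O_∞ has full Haar measure in O_∞: for every Haar measure μ on K_∞ = F_q((1/t)), the complement O_∞ ∖ Ψ_M is μ-null. (This is the case A = F_q[t], genus 0, deg P_∞ = 1 of Theorem 1.1 of the paper.) -/
/-!
Statement 0: For every integer `M`, the set `Ψ_M` of `M`-approximable elements of `O_∞`
has full Haar measure in `O_∞` (case `A = F_q[t]` of Theorem 1.1).
-/

open FunctionField Filter Polynomial MeasureTheory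
open scoped Multiplicative WithZero

variable (Fq : Type) [Field Fq] [Fintype Fq] [DecidableEq (RatFunc Fq)]

/-- The real absolute value attached to a `ℤₘ₀`-valued valuation with base `q`:
`Multiplicative.ofAdd n ↦ q ^ n` and `0 ↦ 0`. -/
noncomputable def zabs (q : ℕ) (x : ℤᵐ⁰) : ℝ :=
  if hx : x = 0 then 0 else (q : ℝ) ^ Multiplicative.toAdd (WithZero.unzero hx)

/-- The absolute value `|h| = q ^ (-ν_∞ h)` on `K_∞ = F_q((1/t))`. -/
noncomputable def absInfty (q : ℕ) (h : RatFunc.CompletionAtInfty Fq) : ℝ :=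
  zabs q (Valued.v h)

/-- The embedding of the polynomial ring `F_q[t]` into `K_∞ = F_q((1/t))`. -/
noncomputable def polyToInfty (p : Polynomial Fq) : RatFunc.CompletionAtInfty Fq :=
  letI := RatFunc.inftyValued Fq
  UniformSpace.Completion.coe' (algebraMap (Polynomial Fq) (RatFunc Fq) p)

/-- `f/g` is an `M`-approximation of `α`: `f` and `g` are coprime, `g ≠ 0`, and
`|α - f/g| < q^(-M) / |g|²`. -/
def IsApprox (q : ℕ) (M : ℤ) (α : RatFunc.CompletionAtInfty Fq) (f g : Polynomial Fq) : Prop :=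
  g ≠ 0 ∧ IsCoprime f g ∧
    absInfty Fq q (α - polyToInfty Fq f / polyToInfty Fq g) <
      (q : ℝ) ^ (-M) / absInfty Fq q (polyToInfty Fq g) ^ 2

/-- `α` is `M`-approximable: it is the limit of a sequence of `M`-approximations of `α`. -/
def IsApproximable (q : ℕ) (M : ℤ) (α : RatFunc.CompletionAtInfty Fq) : Prop :=
  ∃ f g : ℕ → Polynomial Fq, (∀ n, IsApprox Fq q M α (f n) (g n)) ∧
    Tendsto (fun n => polyToInfty Fq (f n) / polyToInfty Fq (g n)) atTop (nhds α)

/-- The valuation ring `O_∞ = {α ∈ K_∞ : |α| ≤ 1}`. -/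
def Oinfty (q : ℕ) : Set (RatFunc.CompletionAtInfty Fq) := {α | absInfty Fq q α ≤ 1}

noncomputable instance : MeasurableSpace (RatFunc.CompletionAtInfty Fq) := borel _

instance : BorelSpace (RatFunc.CompletionAtInfty Fq) := ⟨rfl⟩

/-- A Haar measure on `K_∞`: a Borel measure invariant under all additive translations,
positive and finite on `O_∞`. -/
def IsHaar (q : ℕ) (μ : Measure (RatFunc.CompletionAtInfty Fq)) : Prop :=
  (∀ x : RatFunc.CompletionAtInfty Fq, μ.map (fun y => y + x) = μ) ∧
    0 < μ (Oinfty Fq q) ∧ μ (Oinfty Fq q) < ⊤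

/-!
Dirichlet's pigeonhole argument gives, for all `α ∈ K_∞` and `m ≥ 0`, a reduced fraction `f/g`
with `deg g ≤ m` and `|α - f/g| < q^(-m) / |g|`. Apply it to the centre of a ball of radius
`q^(-n)` with `2m ≈ n + M`. If `f/g` lies in the ball, it `M`-approximates every point of the
sub-ball of radius `q^(-n-s)` around it, `s = 2 max(M, 0)`; if not, then `deg g < n - m` is so
small that it `M`-approximates every point of the ball. So the points without an
`M`-approximation within `q^(-N)` form a porous set: every small ball contains a sub-ball, smaller
by the factor `q^s`, missing it. A ball is the disjoint union of `q^s` translates of such a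
sub-ball, so by translation invariance the set loses the proportion `q^(-s)` of its measure at
each of infinitely many scales, and it is null.
-/

open Topology WithZero
open scoped ENNReal

theorem zabs_exp (q : ℕ) (n : ℤ) : zabs q (exp n) = (q : ℝ) ^ n := by
  rw [zabs, dif_neg exp_ne_zero, toAdd_unzero_eq_log, log_exp]

theorem zabs_strictMono {q : ℕ} (hq : 1 < q) : StrictMono (zabs q) := by
  intro x y hxy
  have hy : y ≠ 0 := ne_zero_of_lt hxy
  rw [zabs, zabs, dif_neg hy, toAdd_unzero_eq_log]
  split_ifs with hx
  · positivity
  · rw [toAdd_unzero_eq_log]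
    exact zpow_lt_zpow_right₀ (by exact_mod_cast hq) ((log_lt_log hx hy).mpr hxy)

namespace Valued

variable {R Γ₀ : Type*} [Ring R] [LinearOrderedCommGroupWithZero Γ₀] [Valued R Γ₀]

theorem setOf_v_sub_lt_mem_nhds (x : R) {a : R} (ha : v a ≠ 0) :
    {y | v (y - x) < v a} ∈ 𝓝 x :=
  mem_nhds.mpr ⟨Units.mk0 (v.restrict a) (by simpa using ha),
    fun _ hy => v.restrict_lt_iff.mp hy⟩

theorem isOpen_setOf_v_sub_lt (x a : R) : IsOpen {y | v (y - x) < v a} := by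
  refine isOpen_iff_mem_nhds.mpr fun z hz => ?_
  filter_upwards [setOf_v_sub_lt_mem_nhds z (ne_zero_of_lt hz)] with y hy
  simpa using Valuation.map_add_lt v hy hz

theorem tendsto_zero_of_v_le {ι : Type*} {l : Filter ι} {y z : ι → R}
    (hz : Tendsto z l (𝓝 0)) (h : ∀ i, v (y i) ≤ v (z i)) : Tendsto y l (𝓝 0) := by
  rw [(hasBasis_nhds_zero R Γ₀).tendsto_right_iff] at hz ⊢
  intro γ _
  filter_upwards [hz γ trivial] with i hi
  exact (v.restrict_le_iff.mpr (h i)).trans_lt hi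

end Valued

namespace RatFunc.CompletionAtInfty

open Valued (v)

variable {F : Type} [Field F] [DecidableEq (RatFunc F)] {q : ℕ}

local notation "K∞" => RatFunc.CompletionAtInfty F
local notation "ι" => algebraMap (RatFunc F) (RatFunc.CompletionAtInfty F)

theorem v_algebraMap (r : RatFunc F) : v (ι r) = inftyValuation F r :=
  @Valued.valuedCompletion_apply (RatFunc F) _ _ _ (inftyValued F) r

theorem polyToInfty_def (p : F[X]) : polyToInfty F p = ι (algebraMap F[X] (RatFunc F) p) := rfl

theorem v_polyToInfty {p : F[X]} (hp : p ≠ 0) :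
    v (polyToInfty F p) = exp (p.natDegree : ℤ) := by
  rw [polyToInfty_def, v_algebraMap, inftyValuation_apply, inftyValuation.polynomial F hp]

theorem polyToInfty_ne_zero {p : F[X]} (hp : p ≠ 0) : polyToInfty F p ≠ 0 := by
  rw [← (v : Valuation K∞ ℤᵐ⁰).ne_zero_iff, v_polyToInfty hp]
  exact exp_ne_zero

theorem v_algebraMap_X_zpow (k : ℤ) : v (ι RatFunc.X ^ k) = exp k := by
  rw [← map_zpow₀, v_algebraMap, inftyValuation.X_zpow]

theorem polyToInfty_num_div_denom (r : RatFunc F) :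
    polyToInfty F r.num / polyToInfty F r.denom = ι r := by
  rw [polyToInfty_def, polyToInfty_def, ← map_div₀, RatFunc.num_div_denom]

theorem v_polyToInfty_lt_exp_iff {p : F[X]} {j : ℕ} :
    v (polyToInfty F p) < exp (j : ℤ) ↔ p.degree < j := by
  rcases eq_or_ne p 0 with rfl | hp
  · simp [polyToInfty_def]
  · rw [v_polyToInfty hp, exp_lt_exp, degree_eq_natDegree hp]
    norm_cast

theorem absInfty_lt_zpow_iff (hq : 1 < q) {x : K∞} {n : ℤ} :
    absInfty F q x < (q : ℝ) ^ n ↔ v x < exp n := by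
  rw [absInfty, ← zabs_exp, (zabs_strictMono hq).lt_iff_lt]

theorem absInfty_le_zpow_iff (hq : 1 < q) {x : K∞} {n : ℤ} :
    absInfty F q x ≤ (q : ℝ) ^ n ↔ v x ≤ exp n := by
  rw [absInfty, ← zabs_exp, (zabs_strictMono hq).le_iff_le]

theorem absInfty_polyToInfty {p : F[X]} (hp : p ≠ 0) :
    absInfty F q (polyToInfty F p) = (q : ℝ) ^ (p.natDegree : ℤ) := by
  rw [absInfty, v_polyToInfty hp, zabs_exp]

theorem exists_v_sub_algebraMap_lt_one (x : K∞) : ∃ r : RatFunc F, v (x - ι r) < 1 := by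
  obtain ⟨_, hy, r, rfl⟩ := mem_closure_iff_nhds.mp (UniformSpace.Completion.denseRange_coe x) _
    (Valued.setOf_v_sub_lt_mem_nhds x (a := 1) (by simp))
  refine ⟨r, ?_⟩
  rw [Valuation.map_sub_swap, ← map_one (v : Valuation K∞ ℤᵐ⁰)]
  exact hy

theorem exists_v_sub_polyToInfty_lt_one (x : K∞) : ∃ P : F[X], v (x - polyToInfty F P) < 1 := by
  obtain ⟨r, hr⟩ := exists_v_sub_algebraMap_lt_one x
  have hD := polyToInfty_ne_zero r.denom_ne_zero
  have hsplit : ι r - polyToInfty F (r.num /ₘ r.denom) =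
      polyToInfty F (r.num %ₘ r.denom) / polyToInfty F r.denom := by
    have hdiv := r.num.modByMonic_add_div r.denom
    set P := r.num /ₘ r.denom
    set R := r.num %ₘ r.denom
    rw [← polyToInfty_num_div_denom, div_sub' hD, ← hdiv]
    simp only [polyToInfty_def, map_add, map_mul]
    ring
  refine ⟨r.num /ₘ r.denom, ?_⟩
  have hfrac : v (ι r - polyToInfty F (r.num /ₘ r.denom)) < 1 := by
    rw [hsplit, map_div₀, v_polyToInfty r.denom_ne_zero, div_lt_one₀ exp_pos,
      v_polyToInfty_lt_exp_iff, ← degree_eq_natDegree r.denom_ne_zero]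
    exact degree_modByMonic_lt _ r.monic_denom
  simpa using Valuation.map_add_lt v hr hfrac

theorem exists_mem_degreeLT_v_sub_lt {y : K∞} {n : ℤ} (hy : v y < exp (-n)) (j : ℕ) :
    ∃ p ∈ degreeLT F j,
      v (y - polyToInfty F p * ι RatFunc.X ^ (-(n + j))) < exp (-(n + j)) := by
  obtain ⟨P, hP⟩ := exists_v_sub_polyToInfty_lt_one (y * ι RatFunc.X ^ (n + j))
  have hyX : v (y * ι RatFunc.X ^ (n + j)) < exp (j : ℤ) := by
    rw [map_mul]
    calc v y * v (ι RatFunc.X ^ (n + j)) < exp (-n) * exp (n + j) := by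
          rw [v_algebraMap_X_zpow]; exact mul_lt_mul_of_pos_right hy exp_pos
      _ = exp (j : ℤ) := by rw [← exp_add]; ring_nf
  refine ⟨P, mem_degreeLT.mpr (v_polyToInfty_lt_exp_iff.mp ?_), ?_⟩
  · simpa using Valuation.map_sub_lt v hyX (hP.trans_le (by rw [← exp_zero, exp_le_exp]; omega))
  · rw [show y - polyToInfty F P * ι RatFunc.X ^ (-(n + j)) =
        (y * ι RatFunc.X ^ (n + j) - polyToInfty F P) * ι RatFunc.X ^ (-(n + j)) by
      rw [sub_mul, mul_assoc, ← zpow_add₀ ((_root_.map_ne_zero _).mpr RatFunc.X_ne_zero),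
        add_neg_cancel, zpow_zero, mul_one], map_mul, v_algebraMap_X_zpow]
    simpa using mul_lt_mul_of_pos_right hP (exp_pos (a := -(n + j)))

theorem exists_v_polyToInfty_mul_sub_lt [Fintype F] (α : K∞) (m : ℕ) :
    ∃ g f : F[X], g ≠ 0 ∧ g.natDegree ≤ m ∧
      v (polyToInfty F g * α - polyToInfty F f) < exp (-(m : ℤ)) := by
  set G := (degreeLTEquiv F (m + 1)).symm
  have hdigits : ∀ c : Fin (m + 1) → F, ∃ P : F[X], ∃ d : Fin m → F,
      v (polyToInfty F (G c) * α - polyToInfty F P - polyToInfty F ((degreeLTEquiv F m).symm d) *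
        ι RatFunc.X ^ (-(m : ℤ))) < exp (-(m : ℤ)) := by
    intro c
    obtain ⟨P, hP⟩ := exists_v_sub_polyToInfty_lt_one (polyToInfty F (G c) * α)
    obtain ⟨p, hp, hpv⟩ := exists_mem_degreeLT_v_sub_lt (n := 0) (by simpa using hP) m
    refine ⟨P, degreeLTEquiv F m ⟨p, hp⟩, ?_⟩
    simpa using hpv
  -- Pigeonhole: `q ^ (m + 1)` polynomials `G c` against `q ^ m` strings of digits `d c`.
  choose P d hPd using hdigits
  obtain ⟨c₁, c₂, hne, hd⟩ := Fintype.exists_ne_map_eq_of_card_lt d (by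
    simpa [Fintype.card_fun] using Nat.pow_lt_pow_right Fintype.one_lt_card m.lt_succ_self)
  have hg : (G (c₁ - c₂) : F[X]) ≠ 0 := by
    simpa [G, sub_eq_zero] using hne
  refine ⟨G (c₁ - c₂), P c₁ - P c₂, hg, ?_, ?_⟩
  · have := mem_degreeLT.mp (G (c₁ - c₂)).2
    rw [← natDegree_lt_iff_degree_lt hg] at this
    omega
  · convert Valuation.map_sub_lt v (hPd c₁) (hPd c₂) using 2
    simp only [map_sub, Submodule.coe_sub, polyToInfty_def, hd]
    ring

theorem exists_v_sub_algebraMap_lt [Fintype F] (α : K∞) (m : ℕ) :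
    ∃ r : RatFunc F, r.denom.natDegree ≤ m ∧
      v (α - ι r) < exp (-m - r.denom.natDegree : ℤ) := by
  obtain ⟨g, f, hg, hgm, hv⟩ := exists_v_polyToInfty_mul_sub_lt α m
  set r := algebraMap F[X] (RatFunc F) f / algebraMap F[X] (RatFunc F) g
  have hdeg : r.denom.natDegree ≤ g.natDegree :=
    natDegree_le_of_dvd (RatFunc.denom_div_dvd f g) hg
  have hsub : α - ι r = (polyToInfty F g * α - polyToInfty F f) / polyToInfty F g := by
    rw [map_div₀, ← polyToInfty_def, ← polyToInfty_def]
    field_simp [polyToInfty_ne_zero hg]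
  refine ⟨r, hdeg.trans hgm, ?_⟩
  rw [hsub, map_div₀, v_polyToInfty hg, div_lt_iff₀ exp_pos, ← exp_add]
  exact hv.trans_le (exp_le_exp.mpr (by omega))

def ball (x : K∞) (n : ℤ) : Set K∞ := {y | v (y - x) < exp (-n)}

@[simp] theorem mem_ball {x y : K∞} {n : ℤ} : y ∈ ball x n ↔ v (y - x) < exp (-n) := Iff.rfl

theorem isOpen_ball (x : K∞) (n : ℤ) : IsOpen (ball x n) := by
  have := Valued.isOpen_setOf_v_sub_lt x (ι RatFunc.X ^ (-n))
  simp only [v_algebraMap_X_zpow] at this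
  exact this

theorem ball_subset_ball {x : K∞} {m n : ℤ} (h : m ≤ n) : ball x n ⊆ ball x m :=
  fun _ hy => (mem_ball.mp hy).trans_le (exp_le_exp.mpr (by omega))

theorem ball_eq_of_mem {x y : K∞} {n : ℤ} (h : y ∈ ball x n) : ball y n = ball x n := by
  ext z
  simp only [mem_ball]
  constructor <;> intro hz
  · simpa using Valuation.map_add_lt v hz h
  · simpa using Valuation.map_sub_lt v hz h

noncomputable def subballCenter (x : K∞) (n : ℤ) (j : ℕ) (c : Fin j → F) : K∞ :=
  x + polyToInfty F ((degreeLTEquiv F j).symm c) * ι RatFunc.X ^ (-(n + j))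

theorem v_polyToInfty_mul_X_zpow_lt {p : F[X]} {j : ℕ} (hp : p ∈ degreeLT F j) (n : ℤ) :
    v (polyToInfty F p * ι RatFunc.X ^ (-(n + j))) < exp (-n) := by
  rw [map_mul, v_algebraMap_X_zpow, show -n = j + -(n + j) by ring, exp_add]
  exact mul_lt_mul_of_pos_right (v_polyToInfty_lt_exp_iff.mpr (mem_degreeLT.mp hp)) exp_pos

theorem ball_eq_iUnion_ball_subballCenter (x : K∞) (n : ℤ) (j : ℕ) :
    ball x n = ⋃ c : Fin j → F, ball (subballCenter x n j c) (n + j) := by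
  ext y
  simp only [Set.mem_iUnion, mem_ball, subballCenter]
  constructor
  · intro hy
    obtain ⟨p, hp, hpv⟩ := exists_mem_degreeLT_v_sub_lt hy j
    exact ⟨degreeLTEquiv F j ⟨p, hp⟩, by simpa [sub_add_eq_sub_sub] using hpv⟩
  · rintro ⟨c, hc⟩
    rw [← sub_add_sub_cancel y (subballCenter x n j c) x]
    exact Valuation.map_add_lt v (hc.trans_le (exp_le_exp.mpr (by omega)))
      (by simpa [subballCenter] using v_polyToInfty_mul_X_zpow_lt ((degreeLTEquiv F j).symm c).2 n)

theorem pairwise_disjoint_ball_subballCenter (x : K∞) (n : ℤ) (j : ℕ) :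
    Pairwise fun c c' : Fin j → F =>
      Disjoint (ball (subballCenter x n j c) (n + j)) (ball (subballCenter x n j c') (n + j)) := by
  intro c c' hne
  refine Set.disjoint_left.mpr fun y hy hy' => ?_
  have hdiff : v (subballCenter x n j c - subballCenter x n j c') < exp (-(n + j)) := by
    rw [← sub_sub_sub_cancel_left _ _ y]
    exact Valuation.map_sub_lt v (mem_ball.mp hy') (mem_ball.mp hy)
  have hsub : subballCenter x n j c - subballCenter x n j c' =
      polyToInfty F ((degreeLTEquiv F j).symm (c - c')) * ι RatFunc.X ^ (-(n + j)) := by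
    simp only [subballCenter, map_sub, Submodule.coe_sub, polyToInfty_def]
    ring
  have hp : ((degreeLTEquiv F j).symm (c - c') : F[X]) ≠ 0 := by simpa [sub_eq_zero] using hne
  rw [hsub, map_mul, v_polyToInfty hp, v_algebraMap_X_zpow, ← exp_add, exp_lt_exp] at hdiff
  omega

theorem Oinfty_eq_ball (hq : 1 < q) : Oinfty F q = ball 0 (-1) := by
  ext x
  rw [Oinfty, Set.mem_ofPred_eq, mem_ball, sub_zero, neg_neg, ← zpow_zero (q : ℝ),
    absInfty_le_zpow_iff hq, exp_zero, ← lt_mul_exp_iff_le one_ne_zero, one_mul]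

-- The first condition is `|β - r| < q^(-M) / |r.denom|^2`, in valuation form.
def approxSet (M : ℤ) (N : ℕ) : Set K∞ :=
  {β | ∃ r : RatFunc F, v (β - ι r) < exp (-M - 2 * r.denom.natDegree : ℤ) ∧
    v (β - ι r) < exp (-N : ℤ)}

theorem exists_ball_subset_approxSet [Fintype F] {M : ℤ} {N : ℕ} {n : ℤ}
    (hn : 2 * N - M + 1 ≤ n) (x : K∞) :
    ∃ x' ∈ ball x n, ball x' (n + 2 * M.toNat) ⊆ approxSet M N := by
  obtain ⟨m, hm₁, hm₂⟩ : ∃ m : ℕ, n + M ≤ 2 * m + 1 ∧ 2 * m ≤ n + M :=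
    ⟨((n + M) / 2).toNat, by omega, by omega⟩
  obtain ⟨r, hdeg, hr⟩ := exists_v_sub_algebraMap_lt x m
  by_cases hclose : v (x - ι r) < exp (-n)
  · refine ⟨ι r, by rwa [mem_ball, Valuation.map_sub_swap], fun β hβ => ⟨r, ?_, ?_⟩⟩ <;>
      exact (mem_ball.mp hβ).trans_le (exp_le_exp.mpr (by omega))
  · have hfar : m + r.denom.natDegree < n := by
      have := (not_lt.mp hclose).trans_lt hr
      rw [exp_lt_exp] at this
      omega
    have hβr : ∀ β ∈ ball x (n + 2 * M.toNat),
        v (β - ι r) < exp (-m - r.denom.natDegree : ℤ) := by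
      intro β hβ
      rw [← sub_add_sub_cancel β x]
      exact Valuation.map_add_lt v
        ((mem_ball.mp hβ).trans_le (exp_le_exp.mpr (by omega))) hr
    refine ⟨x, by simp, fun β hβ => ⟨r, ?_, ?_⟩⟩ <;>
      exact (hβr β hβ).trans_le (exp_le_exp.mpr (by omega))

theorem isApprox_num_denom (hq : 1 < q) {M : ℤ} {β : K∞} {r : RatFunc F}
    (h : v (β - ι r) < exp (-M - 2 * r.denom.natDegree : ℤ)) :
    IsApprox F q M β r.num r.denom := by
  refine ⟨r.denom_ne_zero, r.isCoprime_num_denom, ?_⟩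
  have hq₀ : (q : ℝ) ≠ 0 := by positivity
  rw [polyToInfty_num_div_denom, absInfty_polyToInfty r.denom_ne_zero, ← zpow_natCast,
    ← zpow_mul, ← zpow_sub₀ hq₀, absInfty_lt_zpow_iff hq]
  convert h using 3
  ring

theorem isApproximable_of_forall_mem_approxSet (hq : 1 < q) {M : ℤ} {α : K∞}
    (h : ∀ N : ℕ, α ∈ approxSet M N) : IsApproximable F q M α := by
  choose r hrM hrN using h
  refine ⟨fun N => (r N).num, fun N => (r N).denom, fun N => isApprox_num_denom hq (hrM N), ?_⟩
  simp only [polyToInfty_num_div_denom]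
  rw [← tendsto_sub_nhds_zero_iff]
  refine Valued.tendsto_zero_of_v_le (z := fun N : ℕ => ι RatFunc.X ^ (-(N : ℤ)))
    ?_ fun N => ?_
  · simp only [zpow_neg, zpow_natCast, ← inv_pow]
    exact Valued.tendsto_zero_pow_of_le_exp_neg_one (by rw [← zpow_neg_one, v_algebraMap_X_zpow])
  · rw [Valuation.map_sub_swap, v_algebraMap_X_zpow]
    exact (hrN N).le

theorem setOf_isApproximable_compl_subset (hq : 1 < q) (M : ℤ) :
    {α : K∞ | IsApproximable F q M α}ᶜ ⊆ ⋃ N : ℕ, (approxSet M N)ᶜ := by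
  rw [Set.compl_subset_comm, Set.compl_iUnion]
  simp only [compl_compl]
  exact fun α hα => isApproximable_of_forall_mem_approxSet hq (Set.mem_iInter.mp hα)

section Measure

variable {μ : Measure (RatFunc.CompletionAtInfty F)} [μ.IsAddRightInvariant]

theorem measure_ball (x : K∞) (n : ℤ) : μ (ball x n) = μ (ball 0 n) := by
  rw [← measure_preimage_add_right μ x (ball x n)]
  congr 1
  ext y
  simp

variable [Fintype F]

theorem measure_ball_eq_pow_mul (hq : Fintype.card F = q) (x : K∞) (n : ℤ) (j : ℕ) :
    μ (ball x n) = (q : ℝ≥0∞) ^ j * μ (ball 0 (n + j)) := by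
  rw [ball_eq_iUnion_ball_subballCenter x n j, measure_iUnion
    (pairwise_disjoint_ball_subballCenter x n j) fun _ => (isOpen_ball _ _).measurableSet,
    tsum_fintype, Finset.sum_congr rfl fun c _ => measure_ball (subballCenter x n j c) (n + j),
    Finset.sum_const, Finset.card_univ, Fintype.card_fun, hq, Fintype.card_fin, nsmul_eq_mul]
  push_cast
  rfl

theorem measure_inter_ball_le_pow (hq : Fintype.card F = q) {E : Set K∞} {s : ℕ} {k₀ : ℤ}
    (hE : ∀ n ≥ k₀, ∀ x, ∃ x' ∈ ball x n, Disjoint (ball x' (n + s)) E) (i : ℕ) :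
    ∀ n ≥ k₀, ∀ x,
      μ (E ∩ ball x n) ≤ (1 - ((q : ℝ≥0∞) ^ s)⁻¹) ^ i * μ (ball x n) := by
  induction i with
  | zero => exact fun n _ x => by simpa using measure_mono Set.inter_subset_right
  | succ i ih =>
    intro n hn x
    classical
    set S : ℝ≥0∞ := (q : ℝ≥0∞) ^ s
    set B := fun c : Fin s → F => ball (subballCenter x n s c) (n + s)
    obtain ⟨x', hx', hdisj⟩ := hE n hn x
    rw [ball_eq_iUnion_ball_subballCenter x n s] at hx'
    obtain ⟨c₀, hc₀⟩ := Set.mem_iUnion.mp hx'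
    have hB₀ : μ (E ∩ B c₀) = 0 := by
      rw [show B c₀ = ball x' (n + s) from (ball_eq_of_mem hc₀).symm, Set.inter_comm,
        hdisj.inter_eq, measure_empty]
    have hS : S - 1 = (1 - S⁻¹) * S := by
      have hS₀ : S ≠ 0 := pow_ne_zero _ (by simp [← hq, Fintype.card_ne_zero])
      rw [ENNReal.sub_mul fun _ _ => ENNReal.pow_ne_top (ENNReal.natCast_ne_top q), one_mul,
        ENNReal.inv_mul_cancel hS₀ (ENNReal.pow_ne_top (ENNReal.natCast_ne_top q))]
    calc μ (E ∩ ball x n) = μ (⋃ c, E ∩ B c) := by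
          rw [ball_eq_iUnion_ball_subballCenter x n s, Set.inter_iUnion]
      _ ≤ ∑ c, μ (E ∩ B c) := measure_iUnion_fintype_le μ _
      _ = ∑ c ∈ Finset.univ.erase c₀, μ (E ∩ B c) :=
          (Finset.sum_erase (f := fun c => μ (E ∩ B c)) _ hB₀).symm
      _ ≤ ∑ c ∈ Finset.univ.erase c₀, (1 - S⁻¹) ^ i * μ (ball 0 (n + s)) :=
          Finset.sum_le_sum fun c _ => (ih (n + s) (by omega) _).trans_eq
            (by rw [measure_ball])
      _ = (1 - S⁻¹) ^ (i + 1) * μ (ball x n) := by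
          rw [Finset.sum_const, Finset.card_erase_of_mem (Finset.mem_univ _), Finset.card_univ,
            Fintype.card_fun, Fintype.card_fin, hq, nsmul_eq_mul, ENNReal.natCast_sub,
            Nat.cast_pow, Nat.cast_one, hS, measure_ball_eq_pow_mul hq x n s]
          ring

theorem measure_inter_ball_eq_zero_of_porous (hq : Fintype.card F = q) {E : Set K∞} {s : ℕ}
    {k₀ : ℤ} (hE : ∀ n ≥ k₀, ∀ x, ∃ x' ∈ ball x n, Disjoint (ball x' (n + s)) E)
    (hfin : μ (ball 0 k₀) ≠ ⊤) (x : K∞) (n : ℤ) : μ (E ∩ ball x n) = 0 := by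
  have hsmall : ∀ n ≥ k₀, ∀ x, μ (E ∩ ball x n) = 0 := by
    intro n hn x
    have hr : 1 - ((q : ℝ≥0∞) ^ s)⁻¹ < 1 :=
      ENNReal.sub_lt_self ENNReal.one_ne_top one_ne_zero (by simp)
    have hball : μ (ball x n) ≠ ⊤ := by
      rw [measure_ball]
      exact ne_top_of_le_ne_top hfin (measure_mono (ball_subset_ball hn))
    have hlim := ENNReal.Tendsto.mul_const (ENNReal.tendsto_pow_atTop_nhds_zero_of_lt_one hr)
      (Or.inr hball)
    rw [zero_mul] at hlim
    exact nonpos_iff_eq_zero.mp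
      (ge_of_tendsto' hlim fun i => measure_inter_ball_le_pow hq hE i n hn x)
  rw [ball_eq_iUnion_ball_subballCenter x n (k₀ - n).toNat, Set.inter_iUnion]
  exact measure_iUnion_null fun c => hsmall _ (by omega) _

end Measure

end RatFunc.CompletionAtInfty

open RatFunc.CompletionAtInfty in
theorem full_measure_of_M_approximable (q : ℕ) (hq : Fintype.card Fq = q) (M : ℤ)
    (μ : Measure (RatFunc.CompletionAtInfty Fq)) (hμ : IsHaar Fq q μ) :
    μ (Oinfty Fq q \ {α | IsApproximable Fq q M α}) = 0 := by
  obtain ⟨hinv, -, hfin⟩ := hμ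
  have : μ.IsAddRightInvariant := ⟨hinv⟩
  have hq₁ : 1 < q := hq ▸ Fintype.one_lt_card
  rw [Oinfty_eq_ball hq₁] at hfin ⊢
  have hsub : ball 0 (-1) \ {α | IsApproximable Fq q M α} ⊆
      ⋃ N : ℕ, (approxSet M N)ᶜ ∩ ball 0 (-1) := by
    rw [Set.sdiff_eq, Set.inter_comm, ← Set.iUnion_inter]
    exact Set.inter_subset_inter_left _ (setOf_isApproximable_compl_subset hq₁ M)
  refine measure_mono_null hsub (measure_iUnion_null fun N => ?_)
  have hfin₀ : μ (ball 0 (2 * N + M.natAbs + 1)) ≠ ⊤ :=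
    ne_top_of_le_ne_top hfin.ne (measure_mono (ball_subset_ball (by omega)))
  refine measure_inter_ball_eq_zero_of_porous hq (s := 2 * M.toNat) (fun n hn x => ?_) hfin₀ _ _
  obtain ⟨x', hx', hball⟩ :=
    exists_ball_subset_approxSet (M := M) (N := N) (n := n) (by omega) x
  exact ⟨x', hx', Set.disjoint_compl_right_iff_subset.mpr (by exact_mod_cast hball)⟩
end

section
/- Let L be a field and v : L → Γ₀ a valuation with values in a linearly ordered commutative group with zero Γ₀. Let a, b, c, d, u, z ∈ L with ad − bc ≠ 0 and cu + d ≠ 0, and suppose v(c·(z − u)) < v(cu + d). Then cz + d ≠ 0 and v( (az+b)/(cz+d) − (au+b)/(cu+d) ) = v(ad − bc) · v(z − u) · (v(cu + d))⁻². In additive notation: for the Möbius transformation ρ(z) = (az+b)/(cz+d) one has ν(ρ(z) − ρ(u)) = ν(ρ′(u)) + ν(z − u), where ρ′(u) = (ad − bc)/(cu + d)². (Lemma 6.2 of the paper, stating that a Möbius transformation changes the valuation of a ball it maps to a ball by the valuation of its derivative at the center.) -/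
theorem div_sub_div_moebius {K : Type*} [Field K] (a b c d u z : K)
    (hz : c * z + d ≠ 0) (hu : c * u + d ≠ 0) :
    (a * z + b) / (c * z + d) - (a * u + b) / (c * u + d) =
      (a * d - b * c) * (z - u) / ((c * z + d) * (c * u + d)) := by
  rw [div_sub_div _ _ hz hu]
  ring

namespace Valuation

variable {K Γ₀ : Type*} [Field K] [LinearOrderedCommGroupWithZero Γ₀] (v : Valuation K Γ₀)

theorem map_moebius_denom_eq {c d u z : K} (h : v (c * (z - u)) < v (c * u + d)) :
    v (c * z + d) = v (c * u + d) := by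
  rw [show c * z + d = c * (z - u) + (c * u + d) by ring]
  exact v.map_add_eq_of_lt_right h

theorem moebius_denom_ne_zero {c d u z : K} (hu : c * u + d ≠ 0)
    (h : v (c * (z - u)) < v (c * u + d)) : c * z + d ≠ 0 := by
  rw [← v.ne_zero_iff, v.map_moebius_denom_eq h]
  exact v.ne_zero_iff.mpr hu

end Valuation

theorem valuation_moebius_sub_general (L : Type*) [Field L]
    (Γ₀ : Type*) [LinearOrderedCommGroupWithZero Γ₀] (v : Valuation L Γ₀)
    (a b c d u z : L) (hden : c * u + d ≠ 0)
    (hball : v (c * (z - u)) < v (c * u + d)) :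
    c * z + d ≠ 0 ∧
      v ((a * z + b) / (c * z + d) - (a * u + b) / (c * u + d)) =
        v (a * d - b * c) * v (z - u) * (v (c * u + d))⁻¹ ^ 2 := by
  have hz := v.moebius_denom_ne_zero hden hball
  refine ⟨hz, ?_⟩
  rw [div_sub_div_moebius a b c d u z hz hden, map_div₀, map_mul, map_mul,
    v.map_moebius_denom_eq hball, ← sq, inv_pow, div_eq_mul_inv]

/-- Lemma 6.2: if `v(c(z-u)) < v(cu+d)` and `ad - bc ≠ 0`, `cu + d ≠ 0`, then
`cz + d ≠ 0` and the Möbius transformation `ρ(z) = (az+b)/(cz+d)` satisfies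
`v(ρ z - ρ u) = v(ad - bc) · v(z - u) · v(cu + d)⁻²`, i.e. additively
`ν(ρ z - ρ u) = ν(ρ'(u)) + ν(z - u)`. -/
theorem valuation_moebius_sub (L : Type*) [Field L]
    (Γ₀ : Type*) [LinearOrderedCommGroupWithZero Γ₀] (v : Valuation L Γ₀)
    (a b c d u z : L) (hdet : a * d - b * c ≠ 0) (hden : c * u + d ≠ 0)
    (hball : v (c * (z - u)) < v (c * u + d)) :
    c * z + d ≠ 0 ∧
      v ((a * z + b) / (c * z + d) - (a * u + b) / (c * u + d)) =
        v (a * d - b * c) * v (z - u) * (v (c * u + d))⁻¹ ^ 2 :=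
  valuation_moebius_sub_general L Γ₀ v a b c d u z hden hball
end

section
/- Let F be a finite field with q elements and L a field extension of F of degree 2. Call a nonzero vector w ∈ L² rational if w is an L-scalar multiple of some nonzero vector of F². Then: (i) for any nonzero vectors v, w ∈ L², there exists g ∈ GL₂(F) such that g·v is an L-scalar multiple of w if and only if v and w are either both rational or both not rational (i.e. the Möbius action of GL₂(F) on ℙ¹(L) has exactly two orbits); (ii) the set of L-lines of L² spanned by rational vectors has exactly q + 1 elements, and the set of remaining L-lines has exactly q² − q elements. (The orbit computation asserted in Example 8.3 of the paper: GL₂(F_q) acts on ℙ¹(F_{q²}) with two orbits, of sizes q + 1 and q² − q.) -/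
/-- A nonzero vector of `L²` is *rational* (over the subfield `F`) if it is an `L`-scalar
multiple of a nonzero vector with entries in `F`. -/
def IsRationalVec (F L : Type*) [Field F] [Field L] [Algebra F L] (w : Fin 2 → L) : Prop :=
  ∃ (c : L) (u : Fin 2 → F), u ≠ 0 ∧ w = c • fun i => algebraMap F L (u i)

/-!
Every line of `L²` is spanned by exactly one of `(1, 0)` or `(z, 1)` with `z ∈ L`, so that
`ℙ¹(L) = L ∪ {∞}`, and the rational lines are those with `z ∈ F` or `∞`, i.e. `ℙ¹(F)`.
`GL₂(F)` is transitive on `F² ∖ 0`, hence on `ℙ¹(F)`. For `z ∉ F` the pair `(z, 1)` is an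
`F`-basis of `L`, so every `z' ∈ L` is `a z + b` with `a, b ∈ F`, and `a ≠ 0` when `z' ∉ F`:
the matrix `!![a, b; 0, 1]` carries `(z, 1)` to `(z', 1)`. So there are `|F| + 1 = q + 1`
rational lines and `|L ∖ F| = q² - q` others.
-/

open Submodule Matrix

section Chart

variable {L : Type*} [Field L]

lemma eq_smul_vecCons_one {v : Fin 2 → L} (h : v 1 ≠ 0) : v = v 1 • ![v 0 / v 1, 1] := by
  ext i; fin_cases i <;> simp [mul_div_cancel₀ _ h]

lemma eq_smul_vecCons_zero {v : Fin 2 → L} (h : v 1 = 0) : v = v 0 • ![1, 0] := by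
  ext i; fin_cases i <;> simp [h]

lemma span_singleton_eq_span_vecCons_one {w : Fin 2 → L} (h : w 1 ≠ 0) :
    span L {w} = span L {![w 0 / w 1, 1]} := by
  conv_lhs => rw [eq_smul_vecCons_one h]
  exact span_singleton_smul_eq (isUnit_iff_ne_zero.mpr h) _

lemma span_singleton_eq_span_vecCons_zero {w : Fin 2 → L} (hw : w ≠ 0) (h : w 1 = 0) :
    span L {w} = span L {![1, 0]} := by
  have hw0 : w 0 ≠ 0 := fun h0 => hw (by ext i; fin_cases i <;> simp [h0, h])
  conv_lhs => rw [eq_smul_vecCons_zero h]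
  exact span_singleton_smul_eq (isUnit_iff_ne_zero.mpr hw0) _

lemma span_vecCons_one_injective : Function.Injective fun z : L => span L {![z, 1]} := by
  intro z z' h
  obtain ⟨u, hu⟩ := span_singleton_eq_span_singleton.mp h
  have hu1 : (u : L) = 1 := by simpa [Units.smul_def] using congrFun hu 1
  simpa [Units.smul_def, hu1] using congrFun hu 0

lemma span_vecCons_one_ne_span_vecCons_zero (z : L) :
    span L {![z, 1]} ≠ span L {![1, 0]} := by
  intro h
  obtain ⟨u, hu⟩ := span_singleton_eq_span_singleton.mp h
  simpa [Units.smul_def] using congrFun hu 1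

end Chart

section Rational

variable {F L : Type*} [Field F] [Field L] [Algebra F L]

lemma isRationalVec_smul_iff {c : L} (hc : c ≠ 0) (w : Fin 2 → L) :
    IsRationalVec F L (c • w) ↔ IsRationalVec F L w := by
  constructor
  · rintro ⟨d, u, hu, he⟩
    exact ⟨c⁻¹ * d, u, hu, by rw [mul_smul, ← he, inv_smul_smul₀ hc]⟩
  · rintro ⟨d, u, hu, rfl⟩
    exact ⟨c * d, u, hu, mul_smul c d _ |>.symm⟩

lemma isRationalVec_of_snd_eq_zero {w : Fin 2 → L} (h : w 1 = 0) : IsRationalVec F L w :=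
  ⟨w 0, ![1, 0], fun h0 => by simpa using congrFun h0 0, by
    rw [eq_smul_vecCons_zero h]; ext i; fin_cases i <;> simp⟩

lemma isRationalVec_vecCons_one_iff (z : L) :
    IsRationalVec F L ![z, 1] ↔ z ∈ Set.range (algebraMap F L) := by
  constructor
  · rintro ⟨c, u, -, he⟩
    have h0 : z = c * algebraMap F L (u 0) := by simpa using congrFun he 0
    have h1 : 1 = c * algebraMap F L (u 1) := by simpa using congrFun he 1
    exact ⟨u 0 / u 1, by rw [map_div₀, h0, eq_inv_of_mul_eq_one_left h1.symm]; ring⟩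
  · rintro ⟨a, rfl⟩
    exact ⟨1, ![a, 1], fun h => by simpa using congrFun h 1, by ext i; fin_cases i <;> simp⟩

lemma isRationalVec_iff_of_snd_ne_zero {v : Fin 2 → L} (h : v 1 ≠ 0) :
    IsRationalVec F L v ↔ v 0 / v 1 ∈ Set.range (algebraMap F L) := by
  conv_lhs => rw [eq_smul_vecCons_one h]
  rw [isRationalVec_smul_iff h, isRationalVec_vecCons_one_iff]

lemma map_mulVec_smul_algebraMap (g : Matrix (Fin 2) (Fin 2) F) (c : L) (u : Fin 2 → F) :
    g.map (algebraMap F L) *ᵥ (c • fun i => algebraMap F L (u i)) =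
      c • fun i => algebraMap F L ((g *ᵥ u) i) := by
  rw [mulVec_smul]
  congr 1
  ext i
  exact (RingHom.map_mulVec (algebraMap F L) g u i).symm

lemma IsRationalVec.map_mulVec {g : Matrix (Fin 2) (Fin 2) F} (hg : g.det ≠ 0) {v : Fin 2 → L}
    (hv : IsRationalVec F L v) : IsRationalVec F L (g.map (algebraMap F L) *ᵥ v) := by
  obtain ⟨c, u, hu, rfl⟩ := hv
  exact ⟨c, g *ᵥ u, fun h => hu (eq_zero_of_mulVec_eq_zero hg h),
    map_mulVec_smul_algebraMap g c u⟩

lemma isRationalVec_map_mulVec_iff {g : Matrix (Fin 2) (Fin 2) F} (hg : g.det ≠ 0)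
    (v : Fin 2 → L) :
    IsRationalVec F L (g.map (algebraMap F L) *ᵥ v) ↔ IsRationalVec F L v := by
  refine ⟨fun h => ?_, IsRationalVec.map_mulVec hg⟩
  have hunit : IsUnit g.det := isUnit_iff_ne_zero.mpr hg
  have hinv : g⁻¹.det ≠ 0 := (isUnit_nonsing_inv_det g hunit).ne_zero
  have := h.map_mulVec hinv
  rwa [mulVec_mulVec, ← Matrix.map_mul, nonsing_inv_mul g hunit,
    Matrix.map_one _ (map_zero _) (map_one _), one_mulVec] at this

end Rational

section Transitive

lemma exists_det_ne_zero_mulVec_vecCons_zero_eq {K : Type*} [Field K] {u : Fin 2 → K}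
    (hu : u ≠ 0) : ∃ g : Matrix (Fin 2) (Fin 2) K, g.det ≠ 0 ∧ g *ᵥ ![1, 0] = u := by
  by_cases h0 : u 0 = 0
  · have h1 : u 1 ≠ 0 := fun h1 => hu (by ext i; fin_cases i <;> simp [h0, h1])
    refine ⟨!![0, 1; u 1, 0], by simp [det_fin_two, h1], ?_⟩
    ext i; fin_cases i <;> simp [h0]
  · refine ⟨!![u 0, 0; u 1, 1], by simp [det_fin_two, h0], ?_⟩
    ext i; fin_cases i <;> simp

lemma exists_det_ne_zero_mulVec_eq {K : Type*} [Field K] {u u' : Fin 2 → K} (hu : u ≠ 0)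
    (hu' : u' ≠ 0) : ∃ g : Matrix (Fin 2) (Fin 2) K, g.det ≠ 0 ∧ g *ᵥ u = u' := by
  obtain ⟨g, hg, rfl⟩ := exists_det_ne_zero_mulVec_vecCons_zero_eq hu
  obtain ⟨g', hg', rfl⟩ := exists_det_ne_zero_mulVec_vecCons_zero_eq hu'
  have hunit : IsUnit g.det := isUnit_iff_ne_zero.mpr hg
  refine ⟨g' * g⁻¹, ?_, ?_⟩
  · rw [det_mul]
    exact mul_ne_zero hg' (isUnit_nonsing_inv_det g hunit).ne_zero
  · rw [← mulVec_mulVec, mulVec_mulVec _ g⁻¹, nonsing_inv_mul g hunit, one_mulVec]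

variable {F L : Type*} [Field F] [Field L] [Algebra F L]

lemma exists_algebraMap_mul_add_eq (hdim : Module.finrank F L = 2) {z : L}
    (hz : z ∉ Set.range (algebraMap F L)) (x : L) :
    ∃ a b : F, algebraMap F L a * z + algebraMap F L b = x := by
  have hli : LinearIndependent F ![z, 1] := by
    rw [linearIndependent_fin2]
    refine ⟨one_ne_zero, fun a ha => hz ⟨a, ?_⟩⟩
    simpa [Algebra.algebraMap_eq_smul_one] using ha
  have hx : x ∈ span F (Set.range ![z, 1]) := by
    rw [hli.span_eq_top_of_card_eq_finrank (by simp [hdim])]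
    trivial
  obtain ⟨a, b, hab⟩ := mem_span_pair.mp (by simpa [Matrix.range_cons] using hx)
  exact ⟨b, a, by simpa [Algebra.smul_def, add_comm] using hab⟩

lemma exists_det_ne_zero_map_mulVec_vecCons_one_eq (hdim : Module.finrank F L = 2) {z z' : L}
    (hz : z ∉ Set.range (algebraMap F L)) (hz' : z' ∉ Set.range (algebraMap F L)) :
    ∃ g : Matrix (Fin 2) (Fin 2) F,
      g.det ≠ 0 ∧ g.map (algebraMap F L) *ᵥ ![z, 1] = ![z', 1] := by
  obtain ⟨a, b, rfl⟩ := exists_algebraMap_mul_add_eq hdim hz z'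
  have ha : a ≠ 0 := by
    rintro rfl
    exact hz' ⟨b, by simp⟩
  refine ⟨!![a, b; 0, 1], by simp [det_fin_two, ha], ?_⟩
  ext i; fin_cases i <;> simp

end Transitive

section Orbits

variable {F L : Type*} [Field F] [Field L] [Algebra F L]

variable (F) in
def SameGL2Orbit (v w : Fin 2 → L) : Prop :=
  ∃ g : Matrix (Fin 2) (Fin 2) F,
    g.det ≠ 0 ∧ ∃ c : L, g.map (algebraMap F L) *ᵥ v = c • w

lemma IsRationalVec.sameGL2Orbit {v w : Fin 2 → L} (hw : w ≠ 0)
    (hrv : IsRationalVec F L v) (hrw : IsRationalVec F L w) :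
    SameGL2Orbit F v w := by
  obtain ⟨c, u, hu, rfl⟩ := hrv
  obtain ⟨d, u', hu', rfl⟩ := hrw
  have hd : d ≠ 0 := by
    rintro rfl
    exact hw (zero_smul _ _)
  obtain ⟨g, hg, hgu⟩ := exists_det_ne_zero_mulVec_eq hu hu'
  refine ⟨g, hg, c / d, ?_⟩
  rw [map_mulVec_smul_algebraMap, hgu, smul_smul, div_mul_cancel₀ c hd]

lemma sameGL2Orbit_of_not_isRationalVec (hdim : Module.finrank F L = 2)
    {v w : Fin 2 → L} (hrv : ¬IsRationalVec F L v) (hrw : ¬IsRationalVec F L w) :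
    SameGL2Orbit F v w := by
  have hv1 : v 1 ≠ 0 := fun h => hrv (isRationalVec_of_snd_eq_zero h)
  have hw1 : w 1 ≠ 0 := fun h => hrw (isRationalVec_of_snd_eq_zero h)
  rw [isRationalVec_iff_of_snd_ne_zero hv1] at hrv
  rw [isRationalVec_iff_of_snd_ne_zero hw1] at hrw
  obtain ⟨g, hg, hgz⟩ := exists_det_ne_zero_map_mulVec_vecCons_one_eq hdim hrv hrw
  refine ⟨g, hg, v 1 / w 1, ?_⟩
  calc g.map (algebraMap F L) *ᵥ v
      = g.map (algebraMap F L) *ᵥ (v 1 • ![v 0 / v 1, 1]) := by rw [← eq_smul_vecCons_one hv1]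
    _ = (v 1 / w 1) • (w 1 • ![w 0 / w 1, 1]) := by
      rw [mulVec_smul, hgz, smul_smul, div_mul_cancel₀ _ hw1]
    _ = (v 1 / w 1) • w := by rw [← eq_smul_vecCons_one hw1]

lemma sameGL2Orbit_iff (hdim : Module.finrank F L = 2) {v w : Fin 2 → L}
    (hv : v ≠ 0) (hw : w ≠ 0) :
    SameGL2Orbit F v w ↔ (IsRationalVec F L v ↔ IsRationalVec F L w) := by
  constructor
  · rintro ⟨g, hg, c, hgv⟩
    have hgL : (g.map (algebraMap F L)).det ≠ 0 := by
      rw [← RingHom.mapMatrix_apply, ← RingHom.map_det]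
      exact (map_ne_zero _).mpr hg
    have hc : c ≠ 0 := by
      rintro rfl
      exact hv (eq_zero_of_mulVec_eq_zero hgL (by rw [hgv, zero_smul]))
    rw [← isRationalVec_map_mulVec_iff hg v, hgv, isRationalVec_smul_iff hc]
  · intro hiff
    by_cases hrv : IsRationalVec F L v
    · exact hrv.sameGL2Orbit hw (hiff.mp hrv)
    · exact sameGL2Orbit_of_not_isRationalVec hdim hrv (mt hiff.mpr hrv)

end Orbits

section Lines

variable {F L : Type*} [Field F] [Field L] [Algebra F L]

variable (L) in
def IsLine (S : Submodule L (Fin 2 → L)) : Prop :=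
  ∃ w : Fin 2 → L, w ≠ 0 ∧ S = span L {w}

variable (F L) in
def IsRationalLine (S : Submodule L (Fin 2 → L)) : Prop :=
  ∃ w : Fin 2 → L, w ≠ 0 ∧ IsRationalVec F L w ∧ S = span L {w}

lemma setOf_isRationalLine_eq :
    {S | IsRationalLine F L S} =
      insert (span L {![1, 0]}) (Set.range fun a : F => span L {![algebraMap F L a, 1]}) := by
  ext S
  constructor
  · rintro ⟨w, hw, hrw, rfl⟩
    by_cases h1 : w 1 = 0
    · exact Or.inl (span_singleton_eq_span_vecCons_zero hw h1)
    · obtain ⟨a, ha⟩ := (isRationalVec_iff_of_snd_ne_zero h1).mp hrw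
      exact Or.inr ⟨a, by simp only [span_singleton_eq_span_vecCons_one h1, ha]⟩
  · rintro (rfl | ⟨a, rfl⟩)
    · exact ⟨![1, 0], by simp, isRationalVec_of_snd_eq_zero rfl, rfl⟩
    · exact ⟨![algebraMap F L a, 1], by simp,
        (isRationalVec_vecCons_one_iff _).mpr ⟨a, rfl⟩, rfl⟩

lemma setOf_isLine_and_not_isRationalLine_eq :
    {S | IsLine L S ∧ ¬IsRationalLine F L S} =
      (fun z : L => span L {![z, 1]}) '' (Set.range (algebraMap F L))ᶜ := by
  ext S
  constructor
  · rintro ⟨⟨w, hw, rfl⟩, hS⟩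
    have hrw : ¬IsRationalVec F L w := fun h => hS ⟨w, hw, h, rfl⟩
    have h1 : w 1 ≠ 0 := fun h => hrw (isRationalVec_of_snd_eq_zero h)
    exact ⟨w 0 / w 1, mt (isRationalVec_iff_of_snd_ne_zero h1).mpr hrw,
      (span_singleton_eq_span_vecCons_one h1).symm⟩
  · rintro ⟨z, hz, rfl⟩
    refine ⟨⟨![z, 1], by simp, rfl⟩, ?_⟩
    rintro ⟨w, hw, hrw, hS⟩
    by_cases h1 : w 1 = 0
    · exact span_vecCons_one_ne_span_vecCons_zero z
        (hS.trans (span_singleton_eq_span_vecCons_zero hw h1))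
    · have hz' : z = w 0 / w 1 :=
        span_vecCons_one_injective (hS.trans (span_singleton_eq_span_vecCons_one h1))
      exact hz (hz' ▸ (isRationalVec_iff_of_snd_ne_zero h1).mp hrw)

lemma natCard_setOf_isRationalLine [Fintype F] :
    Nat.card {S | IsRationalLine F L S} = Fintype.card F + 1 := by
  have hinj : Function.Injective fun a : F => span L {![algebraMap F L a, 1]} :=
    span_vecCons_one_injective.comp (algebraMap F L).injective
  have hnotMem : span L {![1, 0]} ∉ Set.range fun a : F => span L {![algebraMap F L a, 1]} := by
    rintro ⟨a, ha⟩
    exact span_vecCons_one_ne_span_vecCons_zero _ ha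
  rw [Nat.card_coe_set_eq, setOf_isRationalLine_eq, Set.ncard_insert_of_notMem hnotMem,
    Set.ncard_range_of_injective hinj, Nat.card_eq_fintype_card]

lemma natCard_setOf_isLine_and_not_isRationalLine [Fintype F] (hdim : Module.finrank F L = 2) :
    Nat.card {S | IsLine L S ∧ ¬IsRationalLine F L S} = Fintype.card F ^ 2 - Fintype.card F := by
  have : Module.Finite F L := Module.finite_of_finrank_eq_succ hdim
  have : Finite L := Module.finite_of_finite F
  rw [Nat.card_coe_set_eq, setOf_isLine_and_not_isRationalLine_eq,
    Set.ncard_image_of_injective _ span_vecCons_one_injective, Set.ncard_compl,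
    Set.ncard_range_of_injective (algebraMap F L).injective, Module.natCard_eq_pow_finrank (K := F),
    hdim, Nat.card_eq_fintype_card]

end Lines

/-- orbit computation of Example 8.3: let `F` be a finite field with `q`
elements and `L/F` of degree 2. Then (i) two nonzero vectors of `L²` are in the same
`GL₂(F)`-orbit on `ℙ¹(L)` iff they are both rational or both irrational; (ii) there are
exactly `q + 1` rational `L`-lines and `q² - q` remaining `L`-lines in `L²`. -/
theorem GL2_orbits_on_P1_of_quadratic_extension (F L : Type*) [Field F] [Fintype F]
    [Field L] [Algebra F L] (q : ℕ) (hq : Fintype.card F = q)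
    (hdim : Module.finrank F L = 2) :
    (∀ v w : Fin 2 → L, v ≠ 0 → w ≠ 0 →
      ((∃ g : Matrix (Fin 2) (Fin 2) F, g.det ≠ 0 ∧
          ∃ c : L, (g.map (algebraMap F L)).mulVec v = c • w) ↔
        (IsRationalVec F L v ↔ IsRationalVec F L w))) ∧
    Nat.card {S : Submodule L (Fin 2 → L) |
      ∃ w : Fin 2 → L, w ≠ 0 ∧ IsRationalVec F L w ∧ S = Submodule.span L {w}} = q + 1 ∧
    Nat.card {S : Submodule L (Fin 2 → L) |
      (∃ w : Fin 2 → L, w ≠ 0 ∧ S = Submodule.span L {w}) ∧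
        ¬ ∃ w : Fin 2 → L, w ≠ 0 ∧ IsRationalVec F L w ∧ S = Submodule.span L {w}} =
      q ^ 2 - q := by
  subst hq
  exact ⟨fun v w hv hw => sameGL2Orbit_iff hdim hv hw,
    natCard_setOf_isRationalLine, natCard_setOf_isLine_and_not_isRationalLine hdim⟩
end
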